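/- Let M be a special local Moufang set with abelian root group U_∞ and more than 3 equivalence classes. Then for every unit x, h_x = h_{-x} and μ_x = μ_{-x}; in particular every μ-map is an involution: μ_x^2 = 1. -/

import Mathlib

/-!
Write `b_y` for the element of `U_0` sending `∞` to `y`. Specialness gives `b_{-x} x = ∞`, which
pins every μ-map of `x` down to `μ_x = b_{-x} α_x b_{-x}`, gives `b_{-x}⁻¹ = b_x` and hence
`μ_{-x} = μ_x⁻¹`, and makes every element of `G` swapping `0, ∞` special as well. Since
`b_y = τ α_{τ⁻¹ y} τ⁻¹` and `U_∞` is abelian, `μ_{-x}(-t) = -(μ_x t)` for units `t ≁ x`; as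
`μ_{-x}` is itself special, `μ_{-x} t = μ_x t`. So `g = μ_{-x}⁻¹ μ_x` fixes `0`, `∞`, every unit
`≁ x` and every unit `≁ -x`. A fourth class provides a unit `z ≁ -x`; `g` fixes `z`, so it
commutes with `α_z` and `b_z`, and these move every remaining point onto a unit fixed by `g`.
Hence `μ_{-x} = μ_x = μ_x⁻¹`.
-/

open Equiv

structure LocalMoufangSet (X : Type*) where
  r : X → X → Prop
  requiv : Equivalence r
  U : X → Subgroup (Equiv.Perm X)
  preserves : ∀ x : X, ∀ u ∈ U x, ∀ a b : X, r a b ↔ r (u a) (u b)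
  big : ∃ a b c : X, ¬ r a b ∧ ¬ r b c ∧ ¬ r a c
  lm1 : ∀ x y : X, r x y → ∀ u ∈ U x, ∃ v ∈ U y, ∀ z : X, r (u z) (v z)
  lm2_fix : ∀ x : X, ∀ u ∈ U x, u x = x
  lm2_trans : ∀ x y z : X, ¬ r y x → ¬ r z x → ∃! u : Equiv.Perm X, u ∈ U x ∧ u y = z
  lm2'_trans : ∀ x y z : X, ¬ r y x → ¬ r z x → ∃ u ∈ U x, r (u y) z
  lm2'_free : ∀ x : X, ∀ u ∈ U x, ∀ y : X, ¬ r y x → r (u y) y → ∀ z : X, r (u z) z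
  lm3 : ∀ x : X, ∀ g ∈ (⨆ y : X, U y : Subgroup (Equiv.Perm X)),
      (U x).map (MulAut.conj g).toMonoidHom = U (g x)

namespace LocalMoufangSet

variable {X : Type*} (M : LocalMoufangSet X)

/-- The little projective group. -/
def G : Subgroup (Equiv.Perm X) := ⨆ x : X, M.U x

/-- `x` is a unit with respect to the base points `o` (zero) and `ι` (infinity). -/
def IsUnitPt (o ι x : X) : Prop := ¬ M.r x o ∧ ¬ M.r x ι

/-- `μ` is the μ-map of `x`: it lies in the double coset `U_0 α_x U_0` and swaps `o` and `ι`.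
(We use the left-action convention: a right product `g α h` corresponds to `h * α * g`.) -/
def IsMuMap (o ι x : X) (μ : Equiv.Perm X) : Prop :=
  μ o = ι ∧ μ ι = o ∧
    ∃ a ∈ M.U ι, a o = x ∧ ∃ g ∈ M.U o, ∃ h ∈ M.U o, μ = h * a * g

/-- Specialness with respect to a μ-map `τ`: `(-x)τ = -(xτ)` for all units `x`. -/
def Special (o ι : X) (τ : Equiv.Perm X) : Prop :=
  ∀ z : X, IsUnitPt M o ι z → ∀ a ∈ M.U ι, a o = z → ∀ b ∈ M.U ι, b o = τ z →
    τ (a⁻¹ o) = b⁻¹ o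

end LocalMoufangSet

namespace LocalMoufangSet

variable {X : Type*} {M : LocalMoufangSet X} {o ι : X} {τ : Perm X}

theorem mem_G_of_mem_U {x : X} {u : Perm X} (hu : u ∈ M.U x) : u ∈ M.G :=
  Subgroup.mem_iSup_of_mem x hu

theorem rel_apply_iff {g : Perm X} (hg : g ∈ M.G) {a b : X} : M.r (g a) (g b) ↔ M.r a b := by
  refine Subgroup.iSup_induction M.U (C := fun g => ∀ a b, M.r (g a) (g b) ↔ M.r a b) hg
    (fun x u hu a b => (M.preserves x u hu a b).symm) (fun _ _ => Iff.rfl)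
    (fun p q hp hq a b => (hp (q a) (q b)).trans (hq a b)) a b

theorem rel_apply_left_iff {g : Perm X} (hg : g ∈ M.G) {a b : X} :
    M.r (g a) b ↔ M.r a (g⁻¹ b) := by
  simpa using rel_apply_iff hg (a := a) (b := g⁻¹ b)

theorem rel_apply_iff_of_apply_eq {g : Perm X} (hg : g ∈ M.G) {a b c : X} (hb : g b = c) :
    M.r (g a) c ↔ M.r a b := by
  rw [← hb, rel_apply_iff hg]

theorem conj_mem_U {g : Perm X} (hg : g ∈ M.G) {x : X} {u : Perm X} (hu : u ∈ M.U x) :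
    g * u * g⁻¹ ∈ M.U (g x) := by
  rw [← M.lm3 x g hg]
  exact ⟨u, hu, rfl⟩

theorem eq_of_mem_U {x y z : X} (hy : ¬ M.r y x) (hz : ¬ M.r z x) {u v : Perm X}
    (hu : u ∈ M.U x) (hv : v ∈ M.U x) (huy : u y = z) (hvy : v y = z) : u = v :=
  (M.lm2_trans x y z hy hz).unique ⟨hu, huy⟩ ⟨hv, hvy⟩

open Classical in
/-- The element of `U x` mapping `y` to `z` (junk value `1` unless `y, z ≁ x`). -/
noncomputable def rootElem (M : LocalMoufangSet X) (x y z : X) : Perm X :=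
  if h : ¬ M.r y x ∧ ¬ M.r z x then (M.lm2_trans x y z h.1 h.2).choose else 1

section rootElem

variable {x y z : X}

theorem rootElem_mem (hy : ¬ M.r y x) (hz : ¬ M.r z x) : M.rootElem x y z ∈ M.U x := by
  rw [rootElem, dif_pos ⟨hy, hz⟩]
  exact (M.lm2_trans x y z hy hz).choose_spec.1.1

theorem rootElem_apply (hy : ¬ M.r y x) (hz : ¬ M.r z x) : M.rootElem x y z y = z := by
  rw [rootElem, dif_pos ⟨hy, hz⟩]
  exact (M.lm2_trans x y z hy hz).choose_spec.1.2

theorem rootElem_inv_apply (hy : ¬ M.r y x) (hz : ¬ M.r z x) : (M.rootElem x y z)⁻¹ z = y :=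
  Perm.inv_eq_iff_eq.mpr (rootElem_apply hy hz).symm

theorem rootElem_apply_self (hy : ¬ M.r y x) (hz : ¬ M.r z x) : M.rootElem x y z x = x :=
  M.lm2_fix x _ (rootElem_mem hy hz)

theorem rootElem_mem_G (hy : ¬ M.r y x) (hz : ¬ M.r z x) : M.rootElem x y z ∈ M.G :=
  mem_G_of_mem_U (rootElem_mem hy hz)

theorem eq_rootElem (hy : ¬ M.r y x) (hz : ¬ M.r z x) {u : Perm X} (hu : u ∈ M.U x)
    (huy : u y = z) : u = M.rootElem x y z :=
  eq_of_mem_U hy hz hu (rootElem_mem hy hz) huy (rootElem_apply hy hz)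

theorem conj_rootElem (hy : ¬ M.r y x) (hz : ¬ M.r z x) {g : Perm X} (hg : g ∈ M.G) :
    g * M.rootElem x y z * g⁻¹ = M.rootElem (g x) (g y) (g z) :=
  eq_rootElem ((rel_apply_iff hg).not.mpr hy) ((rel_apply_iff hg).not.mpr hz)
    (conj_mem_U hg (rootElem_mem hy hz)) (by simp [rootElem_apply hy hz])

theorem commute_rootElem (hy : ¬ M.r y x) (hz : ¬ M.r z x) {g : Perm X} (hg : g ∈ M.G)
    (hgx : g x = x) (hgy : g y = y) (hgz : g z = z) : Commute g (M.rootElem x y z) := by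
  have h := conj_rootElem hy hz hg
  rw [hgx, hgy, hgz] at h
  exact mul_inv_eq_iff_eq_mul.mp h

end rootElem

theorem apply_eq_self_of_commute {g u : Perm X} (h : Commute g u) {p : X} (hp : g (u p) = u p) :
    g p = p :=
  u.injective (by rw [← Perm.mul_apply, ← h.eq, Perm.mul_apply, hp])

-- `rootElem ι o z` is the paper's `α_z`, so this is `-z = 0 α_z⁻¹`.
noncomputable def neg (M : LocalMoufangSet X) (o ι z : X) : X := (M.rootElem ι o z)⁻¹ o

theorem neg_not_rel_ι (h0 : ¬ M.r o ι) {z : X} (hz : ¬ M.r z ι) : ¬ M.r (M.neg o ι z) ι := by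
  rw [neg, rel_apply_left_iff (inv_mem (rootElem_mem_G h0 hz)), inv_inv,
    rootElem_apply_self h0 hz]
  exact h0

theorem IsUnitPt.neg (h0 : ¬ M.r o ι) {z : X} (hz : M.IsUnitPt o ι z) :
    M.IsUnitPt o ι (M.neg o ι z) := by
  refine ⟨?_, neg_not_rel_ι h0 hz.2⟩
  rw [LocalMoufangSet.neg, rel_apply_left_iff (inv_mem (rootElem_mem_G h0 hz.2)), inv_inv,
    rootElem_apply h0 hz.2]
  exact fun h => hz.1 (M.requiv.symm h)

theorem rootElem_neg (h0 : ¬ M.r o ι) {z : X} (hz : ¬ M.r z ι) :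
    M.rootElem ι o (M.neg o ι z) = (M.rootElem ι o z)⁻¹ :=
  (eq_rootElem h0 (neg_not_rel_ι h0 hz) (inv_mem (rootElem_mem h0 hz)) rfl).symm

theorem neg_neg (h0 : ¬ M.r o ι) {z : X} (hz : ¬ M.r z ι) : M.neg o ι (M.neg o ι z) = z := by
  rw [neg, rootElem_neg h0 hz, inv_inv, rootElem_apply h0 hz]

theorem rootElem_apply_neg_self (z : X) :
    M.rootElem ι o z (M.neg o ι z) = o := by
  simp [neg]

theorem rootElem_apply_neg (h0 : ¬ M.r o ι) (hab : ∀ u ∈ M.U ι, ∀ v ∈ M.U ι, u * v = v * u)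
    {c w : X} (hc : ¬ M.r c ι) (hw : ¬ M.r w ι) :
    M.rootElem ι o c (M.neg o ι w) = M.neg o ι ((M.rootElem ι o c)⁻¹ w) := by
  set a := M.rootElem ι o c
  set b := M.rootElem ι o w
  have hp : ¬ M.r (a⁻¹ w) ι := by
    rwa [rel_apply_left_iff (inv_mem (rootElem_mem_G h0 hc)), inv_inv, rootElem_apply_self h0 hc]
  have h1 : M.rootElem ι o (a⁻¹ w) = a⁻¹ * b :=
    (eq_rootElem h0 hp (mul_mem (inv_mem (rootElem_mem h0 hc)) (rootElem_mem h0 hw))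
      (by rw [Perm.mul_apply, rootElem_apply h0 hw])).symm
  have hcomm : Commute a b := hab _ (rootElem_mem h0 hc) _ (rootElem_mem h0 hw)
  rw [neg, neg, h1, mul_inv_rev, inv_inv]
  exact congrArg (fun g : Perm X => g o) hcomm.inv_right.eq

structure IsSwap (M : LocalMoufangSet X) (o ι : X) (g : Perm X) : Prop where
  mem_G : g ∈ M.G
  apply_o : g o = ι
  apply_ι : g ι = o

structure IsSpecialSwap (M : LocalMoufangSet X) (o ι : X) (τ : Perm X) : Prop
    extends M.IsSwap o ι τ where
  map_neg : ∀ z, M.IsUnitPt o ι z → τ (M.neg o ι z) = M.neg o ι (τ z)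

noncomputable def muMap (M : LocalMoufangSet X) (o ι x : X) : Perm X :=
  M.rootElem o ι (M.neg o ι x) * M.rootElem ι o x * M.rootElem o ι (M.neg o ι x)

theorem IsMuMap.isSwap {x : X} {μ : Perm X} (hμ : M.IsMuMap o ι x μ) : M.IsSwap o ι μ := by
  obtain ⟨hμo, hμι, a, ha, -, g, hg, h, hh, rfl⟩ := hμ
  exact ⟨mul_mem (mul_mem (mem_G_of_mem_U hh) (mem_G_of_mem_U ha)) (mem_G_of_mem_U hg),
    hμo, hμι⟩

theorem IsSwap.inv {g : Perm X} (hg : M.IsSwap o ι g) : M.IsSwap o ι g⁻¹ :=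
  ⟨inv_mem hg.mem_G, by rw [Perm.inv_eq_iff_eq, hg.apply_ι],
    by rw [Perm.inv_eq_iff_eq, hg.apply_o]⟩

theorem IsSwap.isUnitPt_apply {g : Perm X} (hg : M.IsSwap o ι g) {z : X}
    (hz : M.IsUnitPt o ι z) : M.IsUnitPt o ι (g z) :=
  ⟨(rel_apply_iff_of_apply_eq hg.mem_G hg.apply_ι).not.mpr hz.2,
    (rel_apply_iff_of_apply_eq hg.mem_G hg.apply_o).not.mpr hz.1⟩

theorem IsSwap.conj_rootElem (h0 : ¬ M.r o ι) {g : Perm X} (hg : M.IsSwap o ι g) {z : X}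
    (hz : ¬ M.r z ι) : g * M.rootElem ι o z * g⁻¹ = M.rootElem o ι (g z) := by
  rw [LocalMoufangSet.conj_rootElem h0 hz hg.mem_G, hg.apply_ι, hg.apply_o]

theorem IsSwap.isSpecialSwap (h0 : ¬ M.r o ι) (hτ : M.IsSwap o ι τ)
    (hsp : M.Special o ι τ) : M.IsSpecialSwap o ι τ where
  toIsSwap := hτ
  map_neg z hz := hsp z hz _ (rootElem_mem h0 hz.2) (rootElem_apply h0 hz.2) _
    (rootElem_mem h0 (hτ.isUnitPt_apply hz).2) (rootElem_apply h0 (hτ.isUnitPt_apply hz).2)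

theorem IsSpecialSwap.inv (hτ : M.IsSpecialSwap o ι τ) : M.IsSpecialSwap o ι τ⁻¹ where
  toIsSwap := hτ.toIsSwap.inv
  map_neg w hw := by
    rw [Perm.inv_eq_iff_eq, hτ.map_neg _ (hτ.toIsSwap.inv.isUnitPt_apply hw)]
    simp

theorem IsSpecialSwap.rootElem_neg_apply_self (h0 : ¬ M.r o ι) (hτ : M.IsSpecialSwap o ι τ)
    {u : X} (hu : M.IsUnitPt o ι u) : M.rootElem o ι (M.neg o ι u) u = ι := by
  have hw := hτ.inv.isUnitPt_apply hu
  have h1 : M.neg o ι u = τ (M.neg o ι (τ⁻¹ u)) := by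
    rw [hτ.map_neg _ hw]
    simp
  rw [h1, ← hτ.conj_rootElem h0 (hw.neg h0).2, rootElem_neg h0 hw.2, Perm.mul_apply,
    Perm.mul_apply, rootElem_inv_apply h0 hw.2, hτ.apply_o]

theorem IsSpecialSwap.rootElem_neg_inv (h0 : ¬ M.r o ι) (hτ : M.IsSpecialSwap o ι τ)
    {u : X} (hu : M.IsUnitPt o ι u) :
    (M.rootElem o ι (M.neg o ι u))⁻¹ = M.rootElem o ι u :=
  eq_rootElem (h0 ∘ M.requiv.symm) hu.1
    (inv_mem (rootElem_mem (h0 ∘ M.requiv.symm) (hu.neg h0).1))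
    (Perm.inv_eq_iff_eq.mpr (hτ.rootElem_neg_apply_self h0 hu).symm)

theorem IsSpecialSwap.of_isSwap (h0 : ¬ M.r o ι) (hτ : M.IsSpecialSwap o ι τ) {m : Perm X}
    (hm : M.IsSwap o ι m) : M.IsSpecialSwap o ι m where
  toIsSwap := hm
  map_neg z hz := by
    have hmz := hm.isUnitPt_apply hz
    have hinv := hτ.rootElem_neg_inv h0 (hmz.neg h0)
    rw [neg_neg h0 hmz.2] at hinv
    have h := hm.conj_rootElem h0 (hz.neg h0).2
    rw [rootElem_neg h0 hz.2, ← conj_inv, hm.conj_rootElem h0 hz.2, hinv] at h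
    have hι := congrArg (fun g : Perm X => g ι) h
    rwa [rootElem_apply (h0 ∘ M.requiv.symm) (hmz.neg h0).1,
      rootElem_apply (h0 ∘ M.requiv.symm) (hm.isUnitPt_apply (hz.neg h0)).1, eq_comm] at hι

theorem IsSpecialSwap.isSwap_muMap (h0 : ¬ M.r o ι) (hτ : M.IsSpecialSwap o ι τ) {x : X}
    (hx : M.IsUnitPt o ι x) : M.IsSwap o ι (M.muMap o ι x) where
  mem_G := mul_mem (mul_mem (rootElem_mem_G (h0 ∘ M.requiv.symm) (hx.neg h0).1)
    (rootElem_mem_G h0 hx.2)) (rootElem_mem_G (h0 ∘ M.requiv.symm) (hx.neg h0).1)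
  apply_o := by
    rw [muMap, Perm.mul_apply, Perm.mul_apply,
      rootElem_apply_self (h0 ∘ M.requiv.symm) (hx.neg h0).1, rootElem_apply h0 hx.2,
      hτ.rootElem_neg_apply_self h0 hx]
  apply_ι := by
    rw [muMap, Perm.mul_apply, Perm.mul_apply,
      rootElem_apply (h0 ∘ M.requiv.symm) (hx.neg h0).1, rootElem_apply_neg_self,
      rootElem_apply_self (h0 ∘ M.requiv.symm) (hx.neg h0).1]

theorem IsSpecialSwap.eq_muMap (h0 : ¬ M.r o ι) (hτ : M.IsSpecialSwap o ι τ) {x : X}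
    (hx : M.IsUnitPt o ι x) {μ : Perm X} (hμ : M.IsMuMap o ι x μ) : μ = M.muMap o ι x := by
  obtain ⟨hμo, hμι, a, ha, hao, g, hg, h, hh, rfl⟩ := hμ
  obtain rfl : a = M.rootElem ι o x := eq_rootElem h0 hx.2 ha hao
  have hι0 : ¬ M.r ι o := h0 ∘ M.requiv.symm
  have hgι : g ι = M.neg o ι x := by
    rw [neg, Perm.eq_inv_iff_eq]
    apply h.injective
    rw [M.lm2_fix o h hh]
    exact hμι
  have hhx : h x = ι := by
    simpa only [Perm.mul_apply, M.lm2_fix o g hg, rootElem_apply h0 hx.2] using hμo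
  rw [muMap, eq_rootElem hι0 (hx.neg h0).1 hg hgι,
    eq_of_mem_U hx.1 hι0 hh (rootElem_mem hι0 (hx.neg h0).1) hhx
      (hτ.rootElem_neg_apply_self h0 hx)]

theorem IsSpecialSwap.muMap_neg (h0 : ¬ M.r o ι) (hτ : M.IsSpecialSwap o ι τ) {x : X}
    (hx : M.IsUnitPt o ι x) : M.muMap o ι (M.neg o ι x) = (M.muMap o ι x)⁻¹ := by
  rw [muMap, muMap, neg_neg h0 hx.2, rootElem_neg h0 hx.2, mul_inv_rev, mul_inv_rev,
    hτ.rootElem_neg_inv h0 hx, mul_assoc]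

theorem IsSpecialSwap.rootElem_apply_neg (h0 : ¬ M.r o ι)
    (hab : ∀ u ∈ M.U ι, ∀ v ∈ M.U ι, u * v = v * u) (hτ : M.IsSpecialSwap o ι τ) {u s : X}
    (hu : M.IsUnitPt o ι u) (hs : M.IsUnitPt o ι s) (hsu : ¬ M.r s u) :
    M.rootElem o ι u (M.neg o ι s) = M.neg o ι (M.rootElem o ι (M.neg o ι u) s) := by
  have hu' := hτ.inv.isUnitPt_apply hu
  have hs' := hτ.inv.isUnitPt_apply hs
  have hbu : M.rootElem o ι u = τ * M.rootElem ι o (τ⁻¹ u) * τ⁻¹ := by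
    rw [hτ.conj_rootElem h0 hu'.2]
    simp
  have hbnu : M.rootElem o ι (M.neg o ι u) = τ * (M.rootElem ι o (τ⁻¹ u))⁻¹ * τ⁻¹ := by
    rw [← rootElem_neg h0 hu'.2, hτ.conj_rootElem h0 (hu'.neg h0).2, ← hτ.inv.map_neg u hu]
    simp
  have hα := rootElem_mem_G h0 hu'.2
  have hp : M.IsUnitPt o ι ((M.rootElem ι o (τ⁻¹ u))⁻¹ (τ⁻¹ s)) := by
    constructor
    · rw [rel_apply_left_iff (inv_mem hα), inv_inv, rootElem_apply h0 hu'.2,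
        rel_apply_iff (inv_mem hτ.mem_G)]
      exact hsu
    · rw [rel_apply_left_iff (inv_mem hα), inv_inv, rootElem_apply_self h0 hu'.2]
      exact hs'.2
  rw [hbu, hbnu]
  simp only [Perm.mul_apply]
  rw [hτ.inv.map_neg s hs, LocalMoufangSet.rootElem_apply_neg h0 hab hu'.2 hs'.2, hτ.map_neg _ hp]

theorem IsSpecialSwap.muMap_neg_apply_neg (h0 : ¬ M.r o ι)
    (hab : ∀ u ∈ M.U ι, ∀ v ∈ M.U ι, u * v = v * u) (hτ : M.IsSpecialSwap o ι τ) {u t : X}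
    (hu : M.IsUnitPt o ι u) (ht : M.IsUnitPt o ι t) (htu : ¬ M.r t u) :
    M.muMap o ι (M.neg o ι u) (M.neg o ι t) = M.neg o ι (M.muMap o ι u t) := by
  have hι0 : ¬ M.r ι o := h0 ∘ M.requiv.symm
  have hb := rootElem_mem_G hι0 (hu.neg h0).1
  have hα := rootElem_mem_G h0 hu.2
  have hw : M.IsUnitPt o ι (M.rootElem o ι (M.neg o ι u) t) :=
    ⟨(rel_apply_iff_of_apply_eq hb (rootElem_apply_self hι0 (hu.neg h0).1)).not.mpr ht.1,
      (rel_apply_iff_of_apply_eq hb (hτ.rootElem_neg_apply_self h0 hu)).not.mpr htu⟩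
  have hp : M.IsUnitPt o ι (M.rootElem ι o u (M.rootElem o ι (M.neg o ι u) t)) :=
    ⟨(rel_apply_iff_of_apply_eq hα (rootElem_apply_neg_self u)).not.mpr
        ((rel_apply_iff_of_apply_eq hb (rootElem_apply hι0 (hu.neg h0).1)).not.mpr ht.2),
      (rel_apply_iff_of_apply_eq hα (rootElem_apply_self h0 hu.2)).not.mpr hw.2⟩
  have hpu : ¬ M.r (M.rootElem ι o u (M.rootElem o ι (M.neg o ι u) t)) u :=
    (rel_apply_iff_of_apply_eq hα (rootElem_apply h0 hu.2)).not.mpr hw.1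
  simp only [muMap, Perm.mul_apply]
  rw [neg_neg h0 hu.2, hτ.rootElem_apply_neg h0 hab hu ht htu,
    LocalMoufangSet.rootElem_apply_neg h0 hab (hu.neg h0).2 hw.2, rootElem_neg h0 hu.2, inv_inv,
    hτ.rootElem_apply_neg h0 hab hu hp hpu]

theorem IsSpecialSwap.muMap_neg_apply (h0 : ¬ M.r o ι)
    (hab : ∀ u ∈ M.U ι, ∀ v ∈ M.U ι, u * v = v * u) (hτ : M.IsSpecialSwap o ι τ) {x t : X}
    (hx : M.IsUnitPt o ι x) (ht : M.IsUnitPt o ι t) (htx : ¬ M.r t x) :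
    M.muMap o ι (M.neg o ι x) t = M.muMap o ι x t := by
  have hm := hτ.isSwap_muMap h0 hx
  have hmn := hτ.isSwap_muMap h0 (hx.neg h0)
  have h := hτ.muMap_neg_apply_neg h0 hab hx ht htx
  rw [(hτ.of_isSwap h0 hmn).map_neg t ht] at h
  rw [← neg_neg h0 (hmn.isUnitPt_apply ht).2, h, neg_neg h0 (hm.isUnitPt_apply ht).2]

theorem exists_isUnitPt_not_rel
    (big4 : ∃ a b c d : X, ¬ M.r a b ∧ ¬ M.r a c ∧ ¬ M.r a d ∧
      ¬ M.r b c ∧ ¬ M.r b d ∧ ¬ M.r c d) (o ι x : X) :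
    ∃ z, M.IsUnitPt o ι z ∧ ¬ M.r z x := by
  obtain ⟨a, b, c, d, hab, hac, had, hbc, hbd, hcd⟩ := big4
  by_contra h
  have key : ∀ z, M.r z o ∨ M.r z ι ∨ M.r z x := fun z => by
    by_contra hz
    simp only [not_or] at hz
    exact h ⟨z, ⟨hz.1, hz.2.1⟩, hz.2.2⟩
  have same : ∀ {p q y : X}, M.r p y → M.r q y → M.r p q :=
    fun hp hq => M.requiv.trans hp (M.requiv.symm hq)
  rcases key a with ha | ha | ha <;> rcases key b with hb | hb | hb <;>
    rcases key c with hc | hc | hc <;> rcases key d with hd | hd | hd <;>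
    first
      | exact hab (same ha hb) | exact hac (same ha hc) | exact had (same ha hd)
      | exact hbc (same hb hc) | exact hbd (same hb hd) | exact hcd (same hc hd)

theorem eq_one_of_apply_eq_self (h0 : ¬ M.r o ι) {g : Perm X} (hg : g ∈ M.G)
    (hgo : g o = o) (hgι : g ι = ι) {z : X} (hz : M.IsUnitPt o ι z)
    (hfix : ∀ t, M.IsUnitPt o ι t → g t = t) : g = 1 := by
  have hι0 : ¬ M.r ι o := h0 ∘ M.requiv.symm
  refine Equiv.ext fun p => ?_
  have key : ∀ u : Perm X, Commute g u → M.r (u p) z → g p = p := fun u hu hup =>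
    apply_eq_self_of_commute hu (hfix _
      ⟨fun h => hz.1 (M.requiv.trans (M.requiv.symm hup) h),
        fun h => hz.2 (M.requiv.trans (M.requiv.symm hup) h)⟩)
  by_cases hpo : M.r p o
  · exact key _ (commute_rootElem h0 hz.2 hg hgι hgo (hfix z hz))
      ((rel_apply_iff_of_apply_eq (rootElem_mem_G h0 hz.2) (rootElem_apply h0 hz.2)).mpr hpo)
  by_cases hpι : M.r p ι
  · exact key _ (commute_rootElem hι0 hz.1 hg hgo hgι (hfix z hz))
      ((rel_apply_iff_of_apply_eq (rootElem_mem_G hι0 hz.1) (rootElem_apply hι0 hz.1)).mpr hpι)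
  exact hfix p ⟨hpo, hpι⟩

theorem apply_eq_self_of_forall_not_rel (h0 : ¬ M.r o ι)
    (hab : ∀ u ∈ M.U ι, ∀ v ∈ M.U ι, u * v = v * u) {g : Perm X} (hg : g ∈ M.G)
    (hgo : g o = o) (hgι : g ι = ι) {x z : X} (hx : M.IsUnitPt o ι x)
    (hz : M.IsUnitPt o ι z) (hzx : ¬ M.r z (M.neg o ι x)) (hgz : g z = z)
    (hfix : ∀ t, M.IsUnitPt o ι t → ¬ M.r t x → g t = t) {t : X} (ht : M.IsUnitPt o ι t) :
    g t = t := by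
  by_cases htx : M.r t x
  swap
  · exact hfix t ht htx
  -- `α_z t ~ α_z x = α_x z`, a unit not related to `x`, is fixed by `g`, which commutes with `α_z`.
  have hαz := rootElem_mem_G h0 hz.2
  have hαx := rootElem_mem_G h0 hx.2
  have hzx' : M.rootElem ι o z x = M.rootElem ι o x z := by
    have h := congrArg (fun g : Perm X => g o)
      (hab _ (rootElem_mem h0 hz.2) _ (rootElem_mem h0 hx.2))
    simpa only [Perm.mul_apply, rootElem_apply h0 hz.2, rootElem_apply h0 hx.2] using h
  have hrel : M.r (M.rootElem ι o z t) (M.rootElem ι o x z) := by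
    rwa [← hzx', rel_apply_iff hαz]
  have not_rel : ∀ {y : X}, ¬ M.r (M.rootElem ι o x z) y → ¬ M.r (M.rootElem ι o z t) y :=
    fun hy h => hy (M.requiv.trans (M.requiv.symm hrel) h)
  refine apply_eq_self_of_commute (commute_rootElem h0 hz.2 hg hgι hgo hgz) (hfix _ ⟨?_, ?_⟩ ?_)
  · exact not_rel ((rel_apply_iff_of_apply_eq hαx (rootElem_apply_neg_self x)).not.mpr hzx)
  · exact (rel_apply_iff_of_apply_eq hαz (rootElem_apply_self h0 hz.2)).not.mpr ht.2
  · exact not_rel ((rel_apply_iff_of_apply_eq hαx (rootElem_apply h0 hx.2)).not.mpr hz.1)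

theorem IsSpecialSwap.muMap_neg_eq (h0 : ¬ M.r o ι)
    (hab : ∀ u ∈ M.U ι, ∀ v ∈ M.U ι, u * v = v * u)
    (big4 : ∃ a b c d : X, ¬ M.r a b ∧ ¬ M.r a c ∧ ¬ M.r a d ∧
      ¬ M.r b c ∧ ¬ M.r b d ∧ ¬ M.r c d)
    (hτ : M.IsSpecialSwap o ι τ) {x : X} (hx : M.IsUnitPt o ι x) :
    M.muMap o ι (M.neg o ι x) = M.muMap o ι x := by
  have hm := hτ.isSwap_muMap h0 hx
  have hmn := hτ.isSwap_muMap h0 (hx.neg h0)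
  set g := (M.muMap o ι (M.neg o ι x))⁻¹ * M.muMap o ι x
  have hfix : ∀ t, M.muMap o ι (M.neg o ι x) t = M.muMap o ι x t → g t = t := fun t ht => by
    rw [Perm.mul_apply, ← ht]
    simp
  have hfix_x : ∀ t, M.IsUnitPt o ι t → ¬ M.r t x → g t = t := fun t ht htx =>
    hfix t (hτ.muMap_neg_apply h0 hab hx ht htx)
  have hfix_neg_x : ∀ t, M.IsUnitPt o ι t → ¬ M.r t (M.neg o ι x) → g t = t := fun t ht htx => by
    have h := hτ.muMap_neg_apply h0 hab (hx.neg h0) ht htx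
    rw [neg_neg h0 hx.2] at h
    exact hfix t h.symm
  have hg : g ∈ M.G := mul_mem (inv_mem hmn.mem_G) hm.mem_G
  have hgo : g o = o := hfix o (by rw [hm.apply_o, hmn.apply_o])
  have hgι : g ι = ι := hfix ι (by rw [hm.apply_ι, hmn.apply_ι])
  obtain ⟨z, hz, hzx⟩ := exists_isUnitPt_not_rel big4 o ι (M.neg o ι x)
  have hg1 : g = 1 := eq_one_of_apply_eq_self h0 hg hgo hgι hz fun _ =>
    apply_eq_self_of_forall_not_rel h0 hab hg hgo hgι hx hz hzx (hfix_neg_x z hz hzx) hfix_x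
  exact inv_mul_eq_one.mp hg1

end LocalMoufangSet

theorem stmt19_general {X : Type*} (M : LocalMoufangSet X) (o ι : X) (h0 : ¬ M.r o ι)
    (e : X)
    (τ : Equiv.Perm X) (hτ : M.IsMuMap o ι e τ)
    (hsp : M.Special o ι τ)
    (hab : ∀ u ∈ M.U ι, ∀ v ∈ M.U ι, u * v = v * u)
    (big4 : ∃ a b c d : X, ¬ M.r a b ∧ ¬ M.r a c ∧ ¬ M.r a d ∧
      ¬ M.r b c ∧ ¬ M.r b d ∧ ¬ M.r c d) :
    ∀ x : X, M.IsUnitPt o ι x → ∀ α ∈ M.U ι, α o = x →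
      ∀ μx μnx : Equiv.Perm X,
        M.IsMuMap o ι x μx → M.IsMuMap o ι (α⁻¹ o) μnx →
        μx * τ = μnx * τ ∧ μx = μnx ∧ μx * μx = 1 := by
  intro x hx α hα hαo μx μnx hμx hμnx
  have hτ' := hτ.isSwap.isSpecialSwap h0 hsp
  obtain rfl : α = M.rootElem ι o x := LocalMoufangSet.eq_rootElem h0 hx.2 hα hαo
  obtain rfl := hτ'.eq_muMap h0 hx hμx
  obtain rfl := hτ'.eq_muMap h0 (hx.neg h0) hμnx
  have heq := hτ'.muMap_neg_eq h0 hab big4 hx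
  refine ⟨by rw [heq], heq.symm, ?_⟩
  nth_rw 2 [← heq]
  rw [hτ'.muMap_neg h0 hx, mul_inv_cancel]

/-- in a special local Moufang set with abelian `U_∞` and more
than 3 equivalence classes, `h_x = h_{-x}` and `μ_x = μ_{-x}` for every unit
`x`; hence every μ-map is an involution.  (Left convention: `h_x = μ_x * τ`.) -/
theorem stmt19 {X : Type*} (M : LocalMoufangSet X) (o ι : X) (h0 : ¬ M.r o ι)
    (e : X) (he : M.IsUnitPt o ι e)
    (τ : Equiv.Perm X) (hτ : M.IsMuMap o ι e τ)
    (hsp : M.Special o ι τ)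
    (hab : ∀ u ∈ M.U ι, ∀ v ∈ M.U ι, u * v = v * u)
    (big4 : ∃ a b c d : X, ¬ M.r a b ∧ ¬ M.r a c ∧ ¬ M.r a d ∧
      ¬ M.r b c ∧ ¬ M.r b d ∧ ¬ M.r c d) :
    ∀ x : X, M.IsUnitPt o ι x → ∀ α ∈ M.U ι, α o = x →
      ∀ μx μnx : Equiv.Perm X,
        M.IsMuMap o ι x μx → M.IsMuMap o ι (α⁻¹ o) μnx →
        μx * τ = μnx * τ ∧ μx = μnx ∧ μx * μx = 1 :=
  stmt19_general M o ι h0 e τ hτ hsp hab big4
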